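/- arXiv:2508.03076 — 8 statements merged into one kernel-verified Lean document; each statement's English description precedes it below -/
import Mathlib

section
/- If (A, ·) is a left pre-Jacobi-Jordan algebra, then the anticommutator product x∗y := x·y + y·x defines a Jacobi-Jordan algebra structure on A, i.e., ∗ is commutative and satisfies (x∗y)∗z + (y∗z)∗x + (z∗x)∗y = 0 for all x,y,z. -/
def IsLeftPreJJ {K A : Type*} [Field K] [AddCommGroup A] [Module K A]
    (m : A →ₗ[K] A →ₗ[K] A) : Prop :=
  ∀ x y z : A, m (m x y) z + m x (m y z) + m (m y x) z + m y (m x z) = 0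

theorem subadjacent_JacobiJordan {K A : Type*} [Field K] [AddCommGroup A] [Module K A]
    (m : A →ₗ[K] A →ₗ[K] A) (h : IsLeftPreJJ m)
    (s : A → A → A) (hs : ∀ x y : A, s x y = m x y + m y x) :
    (∀ x y : A, s x y = s y x) ∧
    (∀ x y z : A, s (s x y) z + s (s y z) x + s (s z x) y = 0) := by
  constructor
  · intro x y; rw [hs, hs]; abel
  · intro x y z
    simp only [hs, map_add, LinearMap.add_apply]
    linear_combination (norm := abel) h x y z + h y z x + h z x y
end

section
/- Let (A,·) be a left pre-Jacobi-Jordan algebra and (B,⋄) an associative and commutative algebra. Then A⊗B with product (x⊗a)⊥(y⊗b) := (x·y)⊗(a⋄b) is a left pre-Jacobi-Jordan algebra. -/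
open TensorProduct

private lemma add4_regroup {M : Type*} [AddCommGroup M] (p q r s p' q' r' s' : M) :
    (p + p') + (q + q') + (r + r') + (s + s') = (p + q + r + s) + (p' + q' + r' + s') := by
  abel

/-- If `(A,·)` is a left pre-Jacobi-Jordan algebra and `(B,⋄)` is an associative and
commutative algebra, then the product on `A ⊗ B` given on simple tensors by
`(x⊗a) ⊥ (y⊗b) = (x·y) ⊗ (a⋄b)` is a left pre-Jacobi-Jordan product. -/
theorem tensor_leftPreJJ {K A B : Type*} [Field K]
    [AddCommGroup A] [Module K A] [AddCommGroup B] [Module K B]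
    (mA : A →ₗ[K] A →ₗ[K] A) (hA : IsLeftPreJJ mA)
    (mB : B →ₗ[K] B →ₗ[K] B)
    (hBassoc : ∀ a b c : B, mB (mB a b) c = mB a (mB b c))
    (hBcomm : ∀ a b : B, mB a b = mB b a)
    (mT : A ⊗[K] B →ₗ[K] A ⊗[K] B →ₗ[K] A ⊗[K] B)
    (hmT : ∀ (x y : A) (a b : B), mT (x ⊗ₜ a) (y ⊗ₜ b) = (mA x y) ⊗ₜ (mB a b)) :
    IsLeftPreJJ mT := by
  intro u v w
  induction u using TensorProduct.induction_on with
  | zero => simp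
  | add u₁ u₂ h₁ h₂ =>
    simp only [map_add, LinearMap.add_apply]
    rw [add4_regroup, h₁, h₂, add_zero]
  | tmul x a =>
    induction v using TensorProduct.induction_on with
    | zero => simp
    | add v₁ v₂ h₁ h₂ =>
      simp only [map_add, LinearMap.add_apply]
      rw [add4_regroup, h₁, h₂, add_zero]
    | tmul y b =>
      induction w using TensorProduct.induction_on with
      | zero => simp
      | add w₁ w₂ h₁ h₂ =>
        simp only [map_add, LinearMap.add_apply]
        rw [add4_regroup, h₁, h₂, add_zero]
      | tmul z c =>
        rw [hmT, hmT, hmT, hmT, hmT, hmT, hmT, hmT]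
        have e2 : mB b (mB a c) = mB (mB a b) c := by
          rw [← hBassoc, hBcomm b a]
        have e3 : mB (mB b a) c = mB (mB a b) c := by rw [hBcomm b a]
        have e4 : mB a (mB b c) = mB (mB a b) c := (hBassoc a b c).symm
        rw [e2, e3, e4, ← add_tmul, ← add_tmul, ← add_tmul, hA, zero_tmul]
end

section
/- Let f: (A,·) → (B,⊤) be a morphism of left pre-Jacobi-Jordan algebras. Define ρ(a)b := f(a)⊤b and μ(a)b := b⊤f(a). Then (B; ρ, μ) is a representation of (A,·), i.e., ρ(x·y + y·x) + ρ(x)ρ(y) + ρ(y)ρ(x) = 0 and μ(x·y) + μ(y)μ(x) + μ(y)ρ(x) + ρ(x)μ(y) = 0 for all x,y ∈ A. -/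
/-- A representation of a left pre-Jacobi-Jordan algebra `(A, m)` on `V`. -/
def IsRepPreJJ {K A V : Type*} [Field K] [AddCommGroup A] [Module K A]
    [AddCommGroup V] [Module K V]
    (m : A →ₗ[K] A →ₗ[K] A) (ρ μ : A → Module.End K V) : Prop :=
  (∀ x y : A, ρ (m x y + m y x) + ρ x * ρ y + ρ y * ρ x = 0) ∧
  (∀ x y : A, μ (m x y) + μ y * μ x + μ y * ρ x + ρ x * μ y = 0)

theorem rep_from_preJJ_morphism {K A B : Type*} [Field K]
    [AddCommGroup A] [Module K A] [AddCommGroup B] [Module K B]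
    (mA : A →ₗ[K] A →ₗ[K] A) (mB : B →ₗ[K] B →ₗ[K] B)
    (hA : IsLeftPreJJ mA) (hB : IsLeftPreJJ mB)
    (f : A →ₗ[K] B) (hf : ∀ x y : A, f (mA x y) = mB (f x) (f y))
    (ρ μ : A → Module.End K B)
    (hρ : ∀ (a : A) (b : B), ρ a b = mB (f a) b)
    (hμ : ∀ (a : A) (b : B), μ a b = mB b (f a)) :
    IsRepPreJJ mA ρ μ := by
  constructor
  · intro x y
    ext b
    simp only [LinearMap.add_apply, Module.End.mul_apply, LinearMap.zero_apply,
      hρ, map_add, hf, LinearMap.add_apply]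
    have h := hB (f x) (f y) b
    abel_nf at h ⊢; exact h
  · intro x y
    ext b
    simp only [LinearMap.add_apply, Module.End.mul_apply, LinearMap.zero_apply,
      hρ, hμ, hf]
    have h := hB b (f x) (f y)
    abel_nf at h ⊢; exact h
end

section
/- Let (V, ρ, μ) be a representation of a left pre-Jacobi-Jordan algebra (A,·) such that μ(x)∘μ(y) = μ(y)∘μ(x) for all x,y ∈ A. Define ρ*, μ*: A → gl(V*) by (ρ*(x)f)(v) := f(ρ(x)v) and (μ*(x)f)(v) := f(μ(x)v). Then (V*; ρ*, μ*) is a representation of (A,·). -/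
/-- The dual representation `(V*, ρ*, μ*)` of a representation with commuting `μ`'s. -/
theorem dual_representation {K A V : Type*} [Field K]
    [AddCommGroup A] [Module K A] [AddCommGroup V] [Module K V]
    (m : A →ₗ[K] A →ₗ[K] A) (h : IsLeftPreJJ m)
    (ρ μ : A → Module.End K V) (hrep : IsRepPreJJ m ρ μ)
    (hcomm : ∀ x y : A, μ x * μ y = μ y * μ x)
    (ρs μs : A → Module.End K (Module.Dual K V))
    (hρs : ∀ (x : A) (f : Module.Dual K V) (v : V), ρs x f v = f (ρ x v))
    (hμs : ∀ (x : A) (f : Module.Dual K V) (v : V), μs x f v = f (μ x v)) :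
    IsRepPreJJ m ρs μs := by
  constructor
  · intro x y
    ext f v
    have h1 := congrArg (fun (T : Module.End K V) => f (T v)) (hrep.1 x y)
    simp only [LinearMap.add_apply, Module.End.mul_apply, map_add, LinearMap.zero_apply,
      map_zero] at h1 ⊢
    simp only [hρs, hμs]
    linear_combination h1
  · intro x y
    ext f v
    have h2 := congrArg (fun (T : Module.End K V) => f (T v)) (hrep.2 x y)
    have hc := congrArg (fun (T : Module.End K V) => f (T v)) (hcomm x y)
    simp only [LinearMap.add_apply, Module.End.mul_apply, map_add, LinearMap.zero_apply,
      map_zero] at h2 hc ⊢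
    simp only [hρs, hμs]
    linear_combination h2 + hc
end

section
/- Let (V,ρ,μ) be a representation of a left pre-Jacobi-Jordan algebra (A,·), and let w ∈ V satisfy ρ(u·v)w + ρ(u)ρ(v)w = 0 for all u,v ∈ A. Then the map D_w(u) := ρ(u)w + μ(u)w is an antiderivation: D_w(u·v) = −μ(v)D_w(u) − ρ(u)D_w(v) for all u,v ∈ A. -/
/-- Inner antiderivations with values in a representation. -/
theorem inner_antiderivation_values {K A V : Type*} [Field K]
    [AddCommGroup A] [Module K A] [AddCommGroup V] [Module K V]
    (m : A →ₗ[K] A →ₗ[K] A) (h : IsLeftPreJJ m)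
    (ρ μ : A → Module.End K V) (hrep : IsRepPreJJ m ρ μ)
    (w : V) (hw : ∀ u v : A, ρ (m u v) w + ρ u (ρ v w) = 0)
    (D : A → V) (hD : ∀ u : A, D u = ρ u w + μ u w) :
    ∀ u v : A, D (m u v) = -(μ v (D u)) - ρ u (D v) := by
  intro u v
  have h2 := congrArg (fun f : Module.End K V => f w) (hrep.2 u v)
  simp only [LinearMap.add_apply, Module.End.mul_apply, LinearMap.zero_apply] at h2
  have h1 := hw u v
  rw [hD, hD, hD]
  simp only [map_add]
  have e1 : ρ (m u v) w = -(ρ u (ρ v w)) := by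
    rw [eq_neg_iff_add_eq_zero]; exact h1
  have e2 : μ (m u v) w = -(μ v (μ u w)) - μ v (ρ u w) - ρ u (μ v w) := by
    rw [eq_sub_iff_add_eq, eq_sub_iff_add_eq, eq_neg_iff_add_eq_zero,
        show μ (m u v) w + ρ u (μ v w) + μ v (ρ u w) + μ v (μ u w)
        = μ (m u v) w + μ v (μ u w) + μ v (ρ u w) + ρ u (μ v w) from by abel]
    exact h2
  rw [e1, e2]
  abel
end

section
/- Let (A,·) be a left pre-Jacobi-Jordan algebra and w ∈ A satisfy (u·v)·w + u·(v·w) = 0 for all u,v ∈ A. Then D_w(u) := u·w + w·u is an antiderivation of A, i.e., D_w(u·v) = −D_w(u)·v − u·D_w(v) for all u,v ∈ A. -/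
/-- Inner antiderivations of a left pre-Jacobi-Jordan algebra. -/
theorem inner_antiderivation {K A : Type*} [Field K]
    [AddCommGroup A] [Module K A]
    (m : A →ₗ[K] A →ₗ[K] A) (h : IsLeftPreJJ m)
    (w : A) (hw : ∀ u v : A, m (m u v) w + m u (m v w) = 0)
    (D : A → A) (hD : ∀ u : A, D u = m u w + m w u) :
    ∀ u v : A, D (m u v) = -(m (D u) v) - m u (D v) := by
  intro u v
  have h1 := hw u v
  have h2 := h u w v
  rw [hD, hD, hD, map_add, map_add, LinearMap.add_apply]
  linear_combination (norm := abel1) h1 + h2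
end

section
/- Let (A,·) be a left pre-Jacobi-Jordan algebra, D₁ an antiderivation and D₂ a derivation of A. Then [D₁,D₂] = D₁D₂ − D₂D₁ is an antiderivation of A. -/
def IsDer {K A : Type*} [Field K] [AddCommGroup A] [Module K A]
    (m : A →ₗ[K] A →ₗ[K] A) (D : Module.End K A) : Prop :=
  ∀ u v : A, D (m u v) = m (D u) v + m u (D v)

def IsAntiDer {K A : Type*} [Field K] [AddCommGroup A] [Module K A]
    (m : A →ₗ[K] A →ₗ[K] A) (D : Module.End K A) : Prop :=
  ∀ u v : A, D (m u v) = -(m (D u) v) - m u (D v)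

theorem commutator_antider_der {K A : Type*} [Field K] [AddCommGroup A] [Module K A]
    (m : A →ₗ[K] A →ₗ[K] A) (h : IsLeftPreJJ m)
    (D₁ D₂ : Module.End K A) (h₁ : IsAntiDer m D₁) (h₂ : IsDer m D₂) :
    IsAntiDer m (D₁ * D₂ - D₂ * D₁) := by
  intro u v
  simp only [LinearMap.sub_apply, Module.End.mul_apply, h₂ u v, map_add, h₁ u v, map_sub,
    map_neg, h₁ (D₂ u) v, h₁ u (D₂ v), h₂ (D₁ u) v, h₂ u (D₁ v), map_sub, LinearMap.sub_apply]
  abel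
end

section
/- Let (A,·) be a left pre-Jacobi-Jordan algebra and ω: A×A → A a bilinear map such that for every scalar t the deformed product x·ₜy := x·y + tω(x,y) is again a left pre-Jacobi-Jordan product. Then ω satisfies both: (i) ω(x,y)·z + ω(y,x)·z + ω(x·y,z) + ω(y·x,z) + ω(x,y·z) + ω(y,x·z) + x·ω(y,z) + y·ω(x,z) = 0, and (ii) ω(ω(x,y),z) + ω(x,ω(y,z)) + ω(ω(y,x),z) + ω(y,ω(x,z)) = 0 for all x,y,z ∈ A. Conversely, if ω satisfies (i) and (ii), then ·ₜ is a left pre-Jacobi-Jordan product for every t. -/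
/-- Left pre-Jacobi-Jordan identity for a plain product. -/
def IsLeftPreJJFun {A : Type*} [AddCommGroup A] (m : A → A → A) : Prop :=
  ∀ x y z : A, m (m x y) z + m x (m y z) + m (m y x) z + m y (m x z) = 0

private lemma key_aux {K A : Type*} [Field K] [Infinite K] [AddCommGroup A] [Module K A]
    (a b : A) (H : ∀ t : K, t • a + (t * t) • b = 0) : a = 0 ∧ b = 0 := by
  obtain ⟨t, ht0, ht1⟩ : ∃ t : K, t ≠ 0 ∧ t ≠ 1 := by
    classical
    obtain ⟨t, ht⟩ := Infinite.exists_notMem_finset ({0, 1} : Finset K)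
    simp only [Finset.mem_insert, Finset.mem_singleton, not_or] at ht
    exact ⟨t, ht.1, ht.2⟩
  have h1 : a + b = 0 := by have := H 1; simpa using this
  have h2 : a + t • b = 0 := by
    have := congrArg (fun v => t⁻¹ • v) (H t)
    simpa [smul_add, smul_smul, inv_mul_cancel₀ ht0, mul_comm, mul_assoc,
      mul_left_comm, ht0] using this
  have hb : (t - 1) • b = 0 := by
    have := congrArg₂ (· - ·) h2 h1
    simpa [sub_smul, one_smul, add_sub_add_left_eq_sub] using this
  have hb0 : b = 0 := by
    have := smul_eq_zero.mp hb
    rcases this with h | h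
    · exact absurd (by linear_combination h : t = 1) ht1
    · exact h
  refine ⟨?_, hb0⟩
  simpa [hb0] using h1

/-- Linear deformations of a left pre-Jacobi-Jordan algebra: `·ₜ` is a left
pre-Jacobi-Jordan product for all `t` iff `ω` is a 2-cocycle and `(A,ω)` is itself
a left pre-Jacobi-Jordan algebra. -/
theorem linear_deformation_iff {K A : Type*} [Field K] [Infinite K]
    [AddCommGroup A] [Module K A]
    (m : A →ₗ[K] A →ₗ[K] A) (h : IsLeftPreJJFun fun x y => m x y)
    (ω : A →ₗ[K] A →ₗ[K] A) :
    (∀ t : K, IsLeftPreJJFun fun x y => m x y + t • ω x y) ↔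
      ((∀ x y z : A,
          m (ω x y) z + m (ω y x) z + ω (m x y) z + ω (m y x) z +
            ω x (m y z) + ω y (m x z) + m x (ω y z) + m y (ω x z) = 0) ∧
        (∀ x y z : A,
          ω (ω x y) z + ω x (ω y z) + ω (ω y x) z + ω y (ω x z) = 0)) := by
  have expand : ∀ (t : K) (x y z : A),
      ((fun x y => m x y + t • ω x y) ((fun x y => m x y + t • ω x y) x y) z +
        (fun x y => m x y + t • ω x y) x ((fun x y => m x y + t • ω x y) y z) +
        (fun x y => m x y + t • ω x y) ((fun x y => m x y + t • ω x y) y x) z +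
        (fun x y => m x y + t • ω x y) y ((fun x y => m x y + t • ω x y) x z))
      = (m (m x y) z + m x (m y z) + m (m y x) z + m y (m x z)) +
        t • (m (ω x y) z + m (ω y x) z + ω (m x y) z + ω (m y x) z +
            ω x (m y z) + ω y (m x z) + m x (ω y z) + m y (ω x z)) +
        (t * t) • (ω (ω x y) z + ω x (ω y z) + ω (ω y x) z + ω y (ω x z)) := by
    intro t x y z
    simp only [map_add, map_smul, LinearMap.add_apply, LinearMap.smul_apply, smul_add, smul_smul]
    module
  constructor
  · intro hT
    have hpair : ∀ x y z : A,
        (m (ω x y) z + m (ω y x) z + ω (m x y) z + ω (m y x) z +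
            ω x (m y z) + ω y (m x z) + m x (ω y z) + m y (ω x z) = 0) ∧
        (ω (ω x y) z + ω x (ω y z) + ω (ω y x) z + ω y (ω x z) = 0) := by
      intro x y z
      apply key_aux (K := K)
      intro t
      have := hT t x y z
      rw [expand t x y z, h x y z, zero_add] at this
      exact this
    exact ⟨fun x y z => (hpair x y z).1, fun x y z => (hpair x y z).2⟩
  · rintro ⟨h1, h2⟩ t x y z
    rw [expand t x y z, h x y z, h1 x y z, h2 x y z, smul_zero, smul_zero, add_zero, add_zero]
end
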